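/- arXiv:2401.02925 — 4 statements merged into one kernel-verified Lean document; each statement's English description precedes it below -/
import Mathlib

section
/- Let (H, B, φ) be a Hopf bracoid over a field K such that φ is a coalgebra morphism, and set u(h) := φ(h ⊗ 1_B). Then u : H → B is a 1-cocycle with action Φ; that is: u is a coalgebra morphism (δ_B(u(h)) = Σ u(h₍₁₎) ⊗ u(h₍₂₎) and ε_B(u(h)) = ε_H(h)), (B, Φ) is a left H-module algebra, and the cocycle condition u(h g) = Σ u(h₍₁₎) · Φ(h₍₂₎ ⊗ u(g)) holds for all h, g ∈ H. -/
set_option maxHeartbeats 1000000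
set_option synthInstance.maxHeartbeats 400000


open TensorProduct LinearMap

noncomputable section

namespace HopfBracoidPaper

variable (K : Type*) [Field K]
variable (H B : Type*) [Ring H] [Ring B] [HopfAlgebra K H] [HopfAlgebra K B]

/-- `u(h) = φ(h ⊗ 1_B)`. -/
def uMap (φ : H ⊗[K] B →ₗ[K] B) : H →ₗ[K] B :=
  φ ∘ₗ (TensorProduct.mk K H B).flip 1

/-- `Φ(h ⊗ b) = Σ S_B(u(h₍₁₎)) · φ(h₍₂₎ ⊗ b)`. -/
def PhiMap (φ : H ⊗[K] B →ₗ[K] B) : H ⊗[K] B →ₗ[K] B :=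
  LinearMap.mul' K B
    ∘ₗ TensorProduct.map (HopfAlgebra.antipode (R := K) ∘ₗ uMap K H B φ) φ
    ∘ₗ (TensorProduct.assoc K H H B).toLinearMap
    ∘ₗ LinearMap.rTensor B (Coalgebra.comul (R := K))

/-- `(B, φ)` is a left `H`-module. -/
structure IsModuleAction (φ : H ⊗[K] B →ₗ[K] B) : Prop where
  one_act : ∀ b : B, φ ((1 : H) ⊗ₜ[K] b) = b
  mul_act : ∀ (h h' : H) (b : B), φ ((h * h') ⊗ₜ[K] b) = φ (h ⊗ₜ[K] φ (h' ⊗ₜ[K] b))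

/-- `(H, B, φ)` is a Hopf bracoid: `(B, φ)` is a left `H`-module and
`φ(h ⊗ b·b') = Σ φ(h₍₁₎ ⊗ b) · Φ(h₍₂₎ ⊗ b')`. -/
structure IsHopfBracoid (φ : H ⊗[K] B →ₗ[K] B) : Prop where
  one_act : ∀ b : B, φ ((1 : H) ⊗ₜ[K] b) = b
  mul_act : ∀ (h h' : H) (b : B), φ ((h * h') ⊗ₜ[K] b) = φ (h ⊗ₜ[K] φ (h' ⊗ₜ[K] b))
  compat : ∀ (h : H) (b b' : B),
    φ (h ⊗ₜ[K] (b * b')) =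
      (LinearMap.mul' K B
        ∘ₗ TensorProduct.map φ (PhiMap K H B φ)
        ∘ₗ (TensorProduct.tensorTensorTensorComm K H H B B).toLinearMap)
        ((Coalgebra.comul (R := K) h) ⊗ₜ[K] (b ⊗ₜ[K] b'))

/-- `φ : H ⊗ B → B` is a coalgebra morphism:
`ε_B(φ(h ⊗ b)) = ε_H(h) ε_B(b)` and
`δ_B(φ(h ⊗ b)) = Σ φ(h₍₁₎ ⊗ b₍₁₎) ⊗ φ(h₍₂₎ ⊗ b₍₂₎)`. -/
structure IsCoalgebraMorphism (φ : H ⊗[K] B →ₗ[K] B) : Prop where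
  counit_comp : ∀ (h : H) (b : B),
    Coalgebra.counit (R := K) (φ (h ⊗ₜ[K] b)) =
      Coalgebra.counit (R := K) h * Coalgebra.counit (R := K) b
  comul_comp : ∀ (h : H) (b : B),
    Coalgebra.comul (R := K) (φ (h ⊗ₜ[K] b)) =
      (TensorProduct.map φ φ)
        ((TensorProduct.tensorTensorTensorComm K H H B B)
          ((Coalgebra.comul (R := K) h) ⊗ₜ[K] (Coalgebra.comul (R := K) b)))

/-- `(B, ψ)` is a left `H`-module algebra. -/
structure IsModuleAlgebra (ψ : H ⊗[K] B →ₗ[K] B) : Prop where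
  one_act : ∀ b : B, ψ ((1 : H) ⊗ₜ[K] b) = b
  mul_act : ∀ (h h' : H) (b : B), ψ ((h * h') ⊗ₜ[K] b) = ψ (h ⊗ₜ[K] ψ (h' ⊗ₜ[K] b))
  act_one : ∀ h : H, ψ (h ⊗ₜ[K] (1 : B)) = Coalgebra.counit (R := K) h • (1 : B)
  act_mul : ∀ (h : H) (b b' : B),
    ψ (h ⊗ₜ[K] (b * b')) =
      (LinearMap.mul' K B
        ∘ₗ TensorProduct.map ψ ψ
        ∘ₗ (TensorProduct.tensorTensorTensorComm K H H B B).toLinearMap)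
        ((Coalgebra.comul (R := K) h) ⊗ₜ[K] (b ⊗ₜ[K] b'))

/-- `π : H → B` is a 1-cocycle with action `γ`. -/
structure IsOneCocycle (π : H →ₗ[K] B) (γ : H ⊗[K] B →ₗ[K] B) : Prop where
  moduleAlgebra : IsModuleAlgebra K H B γ
  counit_comp : ∀ h : H, Coalgebra.counit (R := K) (π h) = Coalgebra.counit (R := K) h
  comul_comp : ∀ h : H,
    Coalgebra.comul (R := K) (π h) = (TensorProduct.map π π) (Coalgebra.comul (R := K) h)
  cocycle : ∀ h g : H,
    π (h * g) =
      (LinearMap.mul' K B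
        ∘ₗ TensorProduct.map π γ
        ∘ₗ (TensorProduct.assoc K H H B).toLinearMap)
        ((Coalgebra.comul (R := K) h) ⊗ₜ[K] π g)


/-- `Φ'(h ⊗ b) = Σ φ(h₍₁₎ ⊗ b) · S_B(u(h₍₂₎))`. -/
def PhiMap' (φ : H ⊗[K] B →ₗ[K] B) : H ⊗[K] B →ₗ[K] B :=
  LinearMap.mul' K B
    ∘ₗ TensorProduct.map φ (HopfAlgebra.antipode (R := K) ∘ₗ uMap K H B φ)
    ∘ₗ (TensorProduct.assoc K H B H).symm.toLinearMap
    ∘ₗ LinearMap.lTensor H (TensorProduct.comm K H B).toLinearMap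
    ∘ₗ (TensorProduct.assoc K H H B).toLinearMap
    ∘ₗ LinearMap.rTensor B (Coalgebra.comul (R := K))

/-- `ψ(h ⊗ b) = Σ π(h₍₁₎) · γ(h₍₂₎ ⊗ b)`. -/
def psiMap (π : H →ₗ[K] B) (γ : H ⊗[K] B →ₗ[K] B) : H ⊗[K] B →ₗ[K] B :=
  LinearMap.mul' K B
    ∘ₗ TensorProduct.map π γ
    ∘ₗ (TensorProduct.assoc K H H B).toLinearMap
    ∘ₗ LinearMap.rTensor B (Coalgebra.comul (R := K))

/-- `Σ ψ(h₍₂₎ ⊗ b) ⊗ h₍₁₎ = Σ ψ(h₍₁₎ ⊗ b) ⊗ h₍₂₎` in `B ⊗ H`. -/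
def SatisfiesStarCondition (ψ : H ⊗[K] B →ₗ[K] B) : Prop :=
  ∀ (h : H) (b : B),
    ((TensorProduct.comm K H B).toLinearMap ∘ₗ LinearMap.lTensor H ψ)
      ((TensorProduct.assoc K H H B) ((Coalgebra.comul (R := K) h) ⊗ₜ[K] b)) =
    ((TensorProduct.comm K H B).toLinearMap ∘ₗ LinearMap.lTensor H ψ)
      ((TensorProduct.assoc K H H B)
        (((TensorProduct.comm K H H) (Coalgebra.comul (R := K) h)) ⊗ₜ[K] b))

/-- A Hopf algebra is cocommutative if `c ∘ δ = δ`. -/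
def IsCocommutative : Prop :=
  ∀ h : H, (TensorProduct.comm K H H) (Coalgebra.comul (R := K) h) = Coalgebra.comul (R := K) h

/-- `x` is a group-like element: `δ(x) = x ⊗ x` and `ε(x) = 1`. -/
def IsGroupLike (x : B) : Prop :=
  Coalgebra.counit (R := K) x = 1 ∧ Coalgebra.comul (R := K) x = x ⊗ₜ[K] x

/-- `Φᵒᵖ(h ⊗ b) = Σ φ(h₍₂₎ ⊗ b) · S_B(u(h₍₁₎))`: the `Φ`-map of `φ` with respect to the
opposite multiplication of `B`. -/
def PhiOpMap (φ : H ⊗[K] B →ₗ[K] B) : H ⊗[K] B →ₗ[K] B :=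
  LinearMap.mul' K B
    ∘ₗ (TensorProduct.comm K B B).toLinearMap
    ∘ₗ TensorProduct.map (HopfAlgebra.antipode (R := K) ∘ₗ uMap K H B φ) φ
    ∘ₗ (TensorProduct.assoc K H H B).toLinearMap
    ∘ₗ LinearMap.rTensor B (Coalgebra.comul (R := K))


section Aux

lemma uMap_apply (φ : H ⊗[K] B →ₗ[K] B) (h : H) : uMap K H B φ h = φ (h ⊗ₜ[K] 1) := rfl

lemma antipode_one' : HopfAlgebra.antipode (R := K) (1 : B) = 1 := by
  have := HopfAlgebra.mul_antipode_rTensor_comul_apply (R := K) (A := B) 1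
  simpa [Algebra.TensorProduct.one_def] using this

lemma counit_collapse {M : Type*} [AddCommMonoid M] [Module K M]
    {ι : Type*} (f : H →ₗ[K] M) (h : H) (r : Coalgebra.Repr K h ι) :
    ∑ i ∈ r.index, Coalgebra.counit (R := K) (r.left i) • f (r.right i) = f h := by
  have h1 : ∑ i ∈ r.index, Coalgebra.counit (R := K) (r.left i) • r.right i = h := by
    have := congrArg (TensorProduct.lid K H) (Coalgebra.sum_counit_tmul_eq r)
    simp only [map_sum, TensorProduct.lid_tmul, one_smul] at this
    exact this
  conv_rhs => rw [← h1]
  rw [map_sum]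
  simp only [map_smul]

/-- Repr of a product from Reprs of factors. -/
def reprMul {ι κ : Type*} {h g : H} (rh : Coalgebra.Repr K h ι) (rg : Coalgebra.Repr K g κ) :
    Coalgebra.Repr K (h * g) (ι × κ) where
  index := rh.index ×ˢ rg.index
  left := fun p => rh.left p.1 * rg.left p.2
  right := fun p => rh.right p.1 * rg.right p.2
  eq := by
    rw [show CoalgebraStruct.comul (R := K) (h * g)
        = Coalgebra.comul (R := K) h * Coalgebra.comul (R := K) g from Bialgebra.comul_mul h g,
      ← rh.eq, ← rg.eq, Finset.sum_mul_sum, Finset.sum_product]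
    simp [Algebra.TensorProduct.tmul_mul_tmul]

@[simp] lemma reprMul_index {ι κ : Type*} {h g : H} (rh : Coalgebra.Repr K h ι) (rg : Coalgebra.Repr K g κ) :
    (reprMul K H rh rg).index = rh.index ×ˢ rg.index := rfl
@[simp] lemma reprMul_left {ι κ : Type*} {h g : H} (rh : Coalgebra.Repr K h ι) (rg : Coalgebra.Repr K g κ) (p) :
    (reprMul K H rh rg).left p = rh.left p.1 * rg.left p.2 := rfl
@[simp] lemma reprMul_right {ι κ : Type*} {h g : H} (rh : Coalgebra.Repr K h ι) (rg : Coalgebra.Repr K g κ) (p) :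
    (reprMul K H rh rg).right p = rh.right p.1 * rg.right p.2 := rfl

/-- Repr of `u h` from a Repr of `h`. -/
def uRepr (φ : H ⊗[K] B →ₗ[K] B) (hco : IsCoalgebraMorphism K H B φ)
    {ι : Type*} {h : H} (r : Coalgebra.Repr K h ι) : Coalgebra.Repr K (uMap K H B φ h) ι where
  index := r.index
  left := fun i => uMap K H B φ (r.left i)
  right := fun i => uMap K H B φ (r.right i)
  eq := by
    have h1 := hco.comul_comp h 1
    rw [show Coalgebra.comul (R := K) (1 : B) = (1 : B) ⊗ₜ[K] 1 by
        rw [Bialgebra.comul_one]; rfl] at h1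
    rw [← r.eq] at h1
    simp only [TensorProduct.sum_tmul, map_sum, TensorProduct.tensorTensorTensorComm_tmul,
      TensorProduct.map_tmul] at h1
    simp only [uMap_apply]
    exact h1.symm

lemma counit_u (φ : H ⊗[K] B →ₗ[K] B) (hco : IsCoalgebraMorphism K H B φ) (h : H) :
    Coalgebra.counit (R := K) (uMap K H B φ h) = Coalgebra.counit (R := K) h := by
  have := hco.counit_comp h 1
  simpa [uMap_apply] using this

lemma PhiMap_rep {ι : Type*} (φ : H ⊗[K] B →ₗ[K] B) (h : H) (b : B) (r : Coalgebra.Repr K h ι) :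
    PhiMap K H B φ (h ⊗ₜ[K] b) =
      ∑ i ∈ r.index,
        HopfAlgebra.antipode (R := K) (uMap K H B φ (r.left i)) * φ (r.right i ⊗ₜ[K] b) := by
  rw [PhiMap]
  simp only [coe_comp, LinearEquiv.coe_coe, Function.comp_apply, rTensor_tmul]
  rw [← r.eq]
  simp only [TensorProduct.sum_tmul, map_sum, TensorProduct.assoc_tmul, TensorProduct.map_tmul,
    LinearMap.mul'_apply, coe_comp, Function.comp_apply]

lemma compat_rep (φ : H ⊗[K] B →ₗ[K] B) (hbr : IsHopfBracoid K H B φ)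
    {ι : Type*} (h : H) (b b' : B) (r : Coalgebra.Repr K h ι) :
    φ (h ⊗ₜ[K] (b * b')) =
      ∑ i ∈ r.index, φ (r.left i ⊗ₜ[K] b) * PhiMap K H B φ (r.right i ⊗ₜ[K] b') := by
  rw [hbr.compat h b b', ← r.eq]
  simp only [TensorProduct.sum_tmul, map_sum, coe_comp, LinearEquiv.coe_coe, Function.comp_apply,
    TensorProduct.tensorTensorTensorComm_tmul, TensorProduct.map_tmul, LinearMap.mul'_apply]

lemma phi_expand (φ : H ⊗[K] B →ₗ[K] B) (hbr : IsHopfBracoid K H B φ)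
    {ι : Type*} (h : H) (b : B) (r : Coalgebra.Repr K h ι) :
    φ (h ⊗ₜ[K] b) =
      ∑ i ∈ r.index, uMap K H B φ (r.left i) * PhiMap K H B φ (r.right i ⊗ₜ[K] b) := by
  have := compat_rep K H B φ hbr h 1 b r
  simpa [uMap_apply] using this

lemma phi_mul_expand (φ : H ⊗[K] B →ₗ[K] B) (hbr : IsHopfBracoid K H B φ)
    {ι κ : Type*} {x y : H} (b : B) (rx : Coalgebra.Repr K x ι) (ry : Coalgebra.Repr K y κ) :
    φ ((x * y) ⊗ₜ[K] b) =
      ∑ k ∈ rx.index, ∑ l ∈ ry.index,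
        uMap K H B φ (rx.left k * ry.left l) *
          PhiMap K H B φ (rx.right k ⊗ₜ[K] PhiMap K H B φ (ry.right l ⊗ₜ[K] b)) := by
  rw [hbr.mul_act x y b, phi_expand K H B φ hbr y b ry, TensorProduct.tmul_sum, map_sum,
    Finset.sum_comm]
  refine Finset.sum_congr rfl fun l _ => ?_
  rw [compat_rep K H B φ hbr x _ _ rx]
  refine Finset.sum_congr rfl fun k _ => ?_
  congr 1
  rw [uMap_apply, uMap_apply, hbr.mul_act]

lemma cancel2 (φ : H ⊗[K] B →ₗ[K] B) (hco : IsCoalgebraMorphism K H B φ)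
    {ι κ : Type*} {x y : H} (rx : Coalgebra.Repr K x ι) (ry : Coalgebra.Repr K y κ) :
    ∑ k ∈ rx.index, ∑ l ∈ ry.index,
      HopfAlgebra.antipode (R := K) (uMap K H B φ (rx.left k * ry.left l)) *
        uMap K H B φ (rx.right k * ry.right l)
      = (Coalgebra.counit (R := K) x * Coalgebra.counit (R := K) y) • (1 : B) := by
  have h1 := HopfAlgebra.sum_antipode_mul_eq_smul (R := K)
    (uRepr K H B φ hco (reprMul K H rx ry))
  rw [counit_u K H B φ hco] at h1
  rw [show Coalgebra.counit (R := K) (x * y)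
      = Coalgebra.counit (R := K) x * Coalgebra.counit (R := K) y from Bialgebra.counit_mul x y]
    at h1
  rw [← h1]
  exact (Finset.sum_product (s := rx.index) (t := ry.index)
    (f := fun p => HopfAlgebra.antipode (R := K) (uMap K H B φ (rx.left p.1 * ry.left p.2)) *
      uMap K H B φ (rx.right p.1 * ry.right p.2))).symm

lemma sweedler3 {M : Type*} [AddCommMonoid M] [Module K M]
    (f : H ⊗[K] (H ⊗[K] H) →ₗ[K] M) (h : H) (r : Coalgebra.Repr K h (H × H))
    (rl : ∀ i, Coalgebra.Repr K (r.left i) (H × H)) (rr : ∀ i, Coalgebra.Repr K (r.right i) (H × H)) :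
    ∑ i ∈ r.index, ∑ j ∈ (rl i).index,
      f ((rl i).left j ⊗ₜ[K] ((rl i).right j ⊗ₜ[K] r.right i))
    = ∑ i ∈ r.index, ∑ j ∈ (rr i).index,
      f (r.left i ⊗ₜ[K] ((rr i).left j ⊗ₜ[K] (rr i).right j)) := by
  have := congrArg f (Coalgebra.sum_tmul_tmul_eq r rl rr)
  simpa [map_sum] using this

lemma sweedler3two {M : Type*} [AddCommMonoid M] [Module K M]
    (f : (H ⊗[K] (H ⊗[K] H)) ⊗[K] (H ⊗[K] (H ⊗[K] H)) →ₗ[K] M)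
    {h g : H} (rh : Coalgebra.Repr K h (H × H)) (rg : Coalgebra.Repr K g (H × H))
    (rh1 : ∀ i, Coalgebra.Repr K (rh.left i) (H × H)) (rh2 : ∀ i, Coalgebra.Repr K (rh.right i) (H × H))
    (rg1 : ∀ j, Coalgebra.Repr K (rg.left j) (H × H)) (rg2 : ∀ j, Coalgebra.Repr K (rg.right j) (H × H)) :
    ∑ j ∈ rg.index, ∑ l ∈ (rg2 j).index, ∑ i ∈ rh.index, ∑ k ∈ (rh2 i).index,
      f ((rh.left i ⊗ₜ[K] ((rh2 i).left k ⊗ₜ[K] (rh2 i).right k)) ⊗ₜ[K]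
         (rg.left j ⊗ₜ[K] ((rg2 j).left l ⊗ₜ[K] (rg2 j).right l)))
    = ∑ j ∈ rg.index, ∑ l ∈ (rg1 j).index, ∑ i ∈ rh.index, ∑ k ∈ (rh1 i).index,
      f (((rh1 i).left k ⊗ₜ[K] ((rh1 i).right k ⊗ₜ[K] rh.right i)) ⊗ₜ[K]
         ((rg1 j).left l ⊗ₜ[K] ((rg1 j).right l ⊗ₜ[K] rg.right j))) := by
  have Eh := Coalgebra.sum_tmul_tmul_eq rh rh1 rh2
  have Eg := Coalgebra.sum_tmul_tmul_eq rg rg1 rg2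
  have hEq := congrArg f (congrArg₂ (· ⊗ₜ[K] ·) Eh Eg)
  simpa only [TensorProduct.sum_tmul, TensorProduct.tmul_sum, map_sum] using hEq.symm


lemma sum_reorder4 {M : Type*} [AddCommMonoid M] {ιh ιg : Type*}
    {ιh' : ιh → Type*} {ιg' : ιg → Type*}
    (s : Finset ιh) (t : Finset ιg) (S : ∀ i, Finset (ιh' i)) (T : ∀ j, Finset (ιg' j))
    (F : ∀ i j, ιh' i → ιg' j → M) :
    ∑ i ∈ s, ∑ j ∈ t, ∑ k ∈ S i, ∑ l ∈ T j, F i j k l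
      = ∑ j ∈ t, ∑ l ∈ T j, ∑ i ∈ s, ∑ k ∈ S i, F i j k l := by
  rw [Finset.sum_comm]
  exact Finset.sum_congr rfl fun j _ =>
    (Finset.sum_congr rfl fun i _ => Finset.sum_comm).trans Finset.sum_comm

lemma PhiMap_one (φ : H ⊗[K] B →ₗ[K] B) (hbr : IsHopfBracoid K H B φ) (b : B) :
    PhiMap K H B φ ((1 : H) ⊗ₜ[K] b) = b := by
  rw [PhiMap]
  simp only [coe_comp, LinearEquiv.coe_coe, Function.comp_apply, rTensor_tmul]
  rw [show Coalgebra.comul (R := K) (1 : H) = (1 : H) ⊗ₜ[K] 1 by rw [Bialgebra.comul_one]; rfl]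
  simp only [TensorProduct.assoc_tmul, TensorProduct.map_tmul, coe_comp, Function.comp_apply,
    LinearMap.mul'_apply]
  rw [uMap_apply, hbr.one_act 1, antipode_one' K B, one_mul, hbr.one_act b]

lemma PhiMap_act_one (φ : H ⊗[K] B →ₗ[K] B) (hco : IsCoalgebraMorphism K H B φ) (h : H) :
    PhiMap K H B φ (h ⊗ₜ[K] (1 : B)) = Coalgebra.counit (R := K) h • (1 : B) := by
  have r := Coalgebra.Repr.arbitrary K h
  rw [PhiMap_rep K H B φ h 1 r]
  have h1 := HopfAlgebra.sum_antipode_mul_eq_smul (R := K) (uRepr K H B φ hco r)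
  rw [counit_u K H B φ hco] at h1
  exact h1

lemma PhiMap_act_mul (φ : H ⊗[K] B →ₗ[K] B) (hbr : IsHopfBracoid K H B φ) (h : H) (b b' : B) :
    PhiMap K H B φ (h ⊗ₜ[K] (b * b')) =
      (LinearMap.mul' K B
        ∘ₗ TensorProduct.map (PhiMap K H B φ) (PhiMap K H B φ)
        ∘ₗ (TensorProduct.tensorTensorTensorComm K H H B B).toLinearMap)
        ((Coalgebra.comul (R := K) h) ⊗ₜ[K] (b ⊗ₜ[K] b')) := by
  have rh := Coalgebra.Repr.arbitrary K h
  have rh1 : ∀ i, Coalgebra.Repr K (rh.left i) (H × H) := fun i => Coalgebra.Repr.arbitrary K _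
  have rh2 : ∀ i, Coalgebra.Repr K (rh.right i) (H × H) := fun i => Coalgebra.Repr.arbitrary K _
  set u := uMap K H B φ with hu
  set Φ := PhiMap K H B φ with hΦ
  set f : H ⊗[K] (H ⊗[K] H) →ₗ[K] B :=
    LinearMap.mul' K B
      ∘ₗ TensorProduct.map (HopfAlgebra.antipode (R := K) ∘ₗ u)
          (LinearMap.mul' K B
            ∘ₗ TensorProduct.map (φ ∘ₗ (TensorProduct.mk K H B).flip b)
                (Φ ∘ₗ (TensorProduct.mk K H B).flip b')) with hf
  have hfval : ∀ x y z : H,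
      f (x ⊗ₜ[K] (y ⊗ₜ[K] z))
        = HopfAlgebra.antipode (R := K) (u x) * (φ (y ⊗ₜ[K] b) * Φ (z ⊗ₜ[K] b')) := by
    intro x y z
    simp [hf]
  calc Φ (h ⊗ₜ[K] (b * b'))
      = ∑ i ∈ rh.index,
          HopfAlgebra.antipode (R := K) (u (rh.left i)) * φ (rh.right i ⊗ₜ[K] (b * b')) :=
        PhiMap_rep K H B φ h (b * b') rh
    _ = ∑ i ∈ rh.index, ∑ j ∈ (rh2 i).index,
          f (rh.left i ⊗ₜ[K] ((rh2 i).left j ⊗ₜ[K] (rh2 i).right j)) := by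
        refine Finset.sum_congr rfl fun i _ => ?_
        rw [compat_rep K H B φ hbr _ b b' (rh2 i), Finset.mul_sum]
        exact Finset.sum_congr rfl fun j _ => (hfval _ _ _).symm
    _ = ∑ i ∈ rh.index, ∑ j ∈ (rh1 i).index,
          f ((rh1 i).left j ⊗ₜ[K] ((rh1 i).right j ⊗ₜ[K] rh.right i)) :=
        (sweedler3 K H f h rh rh1 rh2).symm
    _ = ∑ i ∈ rh.index, Φ (rh.left i ⊗ₜ[K] b) * Φ (rh.right i ⊗ₜ[K] b') := by
        refine Finset.sum_congr rfl fun i _ => ?_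
        rw [hΦ, PhiMap_rep K H B φ (rh.left i) b (rh1 i), Finset.sum_mul]
        refine Finset.sum_congr rfl fun j _ => ?_
        rw [hfval, mul_assoc]
    _ = (LinearMap.mul' K B
          ∘ₗ TensorProduct.map Φ Φ
          ∘ₗ (TensorProduct.tensorTensorTensorComm K H H B B).toLinearMap)
          ((Coalgebra.comul (R := K) h) ⊗ₜ[K] (b ⊗ₜ[K] b')) := by
        rw [← rh.eq]
        simp only [TensorProduct.sum_tmul, map_sum, coe_comp, LinearEquiv.coe_coe,
          Function.comp_apply, TensorProduct.tensorTensorTensorComm_tmul,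
          TensorProduct.map_tmul, LinearMap.mul'_apply]

lemma u_counit_comp (φ : H ⊗[K] B →ₗ[K] B) (hco : IsCoalgebraMorphism K H B φ) (h : H) :
    Coalgebra.counit (R := K) (uMap K H B φ h) = Coalgebra.counit (R := K) h :=
  counit_u K H B φ hco h

lemma u_comul_comp (φ : H ⊗[K] B →ₗ[K] B) (hco : IsCoalgebraMorphism K H B φ) (h : H) :
    Coalgebra.comul (R := K) (uMap K H B φ h)
      = (TensorProduct.map (uMap K H B φ) (uMap K H B φ)) (Coalgebra.comul (R := K) h) := by
  have r := Coalgebra.Repr.arbitrary K h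
  rw [← (uRepr K H B φ hco r).eq, ← r.eq, map_sum]
  exact Finset.sum_congr rfl fun i _ => rfl

lemma u_cocycle (φ : H ⊗[K] B →ₗ[K] B) (hbr : IsHopfBracoid K H B φ) (h g : H) :
    uMap K H B φ (h * g) =
      (LinearMap.mul' K B
        ∘ₗ TensorProduct.map (uMap K H B φ) (PhiMap K H B φ)
        ∘ₗ (TensorProduct.assoc K H H B).toLinearMap)
        ((Coalgebra.comul (R := K) h) ⊗ₜ[K] uMap K H B φ g) := by
  have rh := Coalgebra.Repr.arbitrary K h
  have lhs : uMap K H B φ (h * g) = φ (h ⊗ₜ[K] uMap K H B φ g) := by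
    rw [uMap_apply, hbr.mul_act, ← uMap_apply]
  rw [lhs, phi_expand K H B φ hbr h _ rh, ← rh.eq]
  simp only [TensorProduct.sum_tmul, map_sum, coe_comp, LinearEquiv.coe_coe,
    Function.comp_apply, TensorProduct.assoc_tmul, TensorProduct.map_tmul,
    LinearMap.mul'_apply]


lemma PhiMap_mul_act (φ : H ⊗[K] B →ₗ[K] B) (hbr : IsHopfBracoid K H B φ)
    (hco : IsCoalgebraMorphism K H B φ) (h g : H) (b : B) :
    PhiMap K H B φ ((h * g) ⊗ₜ[K] b)
      = PhiMap K H B φ (h ⊗ₜ[K] PhiMap K H B φ (g ⊗ₜ[K] b)) := by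
  have rh := Coalgebra.Repr.arbitrary K h
  have rg := Coalgebra.Repr.arbitrary K g
  have rh1 : ∀ i, Coalgebra.Repr K (rh.left i) (H × H) := fun i => Coalgebra.Repr.arbitrary K _
  have rh2 : ∀ i, Coalgebra.Repr K (rh.right i) (H × H) := fun i => Coalgebra.Repr.arbitrary K _
  have rg1 : ∀ j, Coalgebra.Repr K (rg.left j) (H × H) := fun j => Coalgebra.Repr.arbitrary K _
  have rg2 : ∀ j, Coalgebra.Repr K (rg.right j) (H × H) := fun j => Coalgebra.Repr.arbitrary K _
  set u := uMap K H B φ with hu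
  set Φ := PhiMap K H B φ with hΦ
  set Ψ : H ⊗[K] H →ₗ[K] B :=
    Φ ∘ₗ LinearMap.lTensor H (Φ ∘ₗ (TensorProduct.mk K H B).flip b) with hΨ
  set f₂ : (H ⊗[K] (H ⊗[K] H)) ⊗[K] (H ⊗[K] (H ⊗[K] H)) →ₗ[K] B :=
    LinearMap.mul' K B
      ∘ₗ TensorProduct.map
          (HopfAlgebra.antipode (R := K) ∘ₗ u ∘ₗ LinearMap.mul' K H)
          (LinearMap.mul' K B ∘ₗ TensorProduct.map (u ∘ₗ LinearMap.mul' K H) Ψ)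
      ∘ₗ LinearMap.lTensor (H ⊗[K] H)
          (TensorProduct.tensorTensorTensorComm K H H H H).toLinearMap
      ∘ₗ (TensorProduct.tensorTensorTensorComm K H (H ⊗[K] H) H (H ⊗[K] H)).toLinearMap
    with hf2
  have hf2val : ∀ x y z a c d : H,
      f₂ ((x ⊗ₜ[K] (y ⊗ₜ[K] z)) ⊗ₜ[K] (a ⊗ₜ[K] (c ⊗ₜ[K] d)))
        = HopfAlgebra.antipode (R := K) (u (x * a)) *
            (u (y * c) * Φ (z ⊗ₜ[K] Φ (d ⊗ₜ[K] b))) := by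
    intro x y z a c d
    simp [hf2, hΨ]
  calc Φ ((h * g) ⊗ₜ[K] b)
      = ∑ p ∈ rh.index ×ˢ rg.index,
          HopfAlgebra.antipode (R := K) (u (rh.left p.1 * rg.left p.2)) *
            φ ((rh.right p.1 * rg.right p.2) ⊗ₜ[K] b) := by
        rw [hΦ, PhiMap_rep K H B φ _ b (reprMul K H rh rg)]
        simp only [reprMul_index, reprMul_left, reprMul_right, ← hu]
    _ = ∑ i ∈ rh.index, ∑ j ∈ rg.index,
          HopfAlgebra.antipode (R := K) (u (rh.left i * rg.left j)) *
            φ ((rh.right i * rg.right j) ⊗ₜ[K] b) :=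
        Finset.sum_product' rh.index rg.index
          (fun i j => HopfAlgebra.antipode (R := K) (u (rh.left i * rg.left j)) *
            φ ((rh.right i * rg.right j) ⊗ₜ[K] b))
    _ = ∑ i ∈ rh.index, ∑ j ∈ rg.index, ∑ k ∈ (rh2 i).index, ∑ l ∈ (rg2 j).index,
          f₂ ((rh.left i ⊗ₜ[K] ((rh2 i).left k ⊗ₜ[K] (rh2 i).right k)) ⊗ₜ[K]
              (rg.left j ⊗ₜ[K] ((rg2 j).left l ⊗ₜ[K] (rg2 j).right l))) := by
        refine Finset.sum_congr rfl fun i _ => Finset.sum_congr rfl fun j _ => ?_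
        rw [phi_mul_expand K H B φ hbr b (rh2 i) (rg2 j), Finset.mul_sum]
        refine Finset.sum_congr rfl fun k _ => ?_
        rw [Finset.mul_sum]
        exact Finset.sum_congr rfl fun l _ => (hf2val _ _ _ _ _ _).symm
    _ = ∑ j ∈ rg.index, ∑ l ∈ (rg2 j).index, ∑ i ∈ rh.index, ∑ k ∈ (rh2 i).index,
          f₂ ((rh.left i ⊗ₜ[K] ((rh2 i).left k ⊗ₜ[K] (rh2 i).right k)) ⊗ₜ[K]
              (rg.left j ⊗ₜ[K] ((rg2 j).left l ⊗ₜ[K] (rg2 j).right l))) :=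
        sum_reorder4 rh.index rg.index (fun i => (rh2 i).index) (fun j => (rg2 j).index)
          (fun i j k l => f₂ ((rh.left i ⊗ₜ[K] ((rh2 i).left k ⊗ₜ[K] (rh2 i).right k)) ⊗ₜ[K]
              (rg.left j ⊗ₜ[K] ((rg2 j).left l ⊗ₜ[K] (rg2 j).right l))))
    _ = ∑ j ∈ rg.index, ∑ l ∈ (rg1 j).index, ∑ i ∈ rh.index, ∑ k ∈ (rh1 i).index,
          f₂ (((rh1 i).left k ⊗ₜ[K] ((rh1 i).right k ⊗ₜ[K] rh.right i)) ⊗ₜ[K]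
              ((rg1 j).left l ⊗ₜ[K] ((rg1 j).right l ⊗ₜ[K] rg.right j))) :=
        sweedler3two K H f₂ rh rg rh1 rh2 rg1 rg2
    _ = ∑ i ∈ rh.index, ∑ j ∈ rg.index, ∑ k ∈ (rh1 i).index, ∑ l ∈ (rg1 j).index,
          f₂ (((rh1 i).left k ⊗ₜ[K] ((rh1 i).right k ⊗ₜ[K] rh.right i)) ⊗ₜ[K]
              ((rg1 j).left l ⊗ₜ[K] ((rg1 j).right l ⊗ₜ[K] rg.right j))) :=
        (sum_reorder4 rh.index rg.index (fun i => (rh1 i).index) (fun j => (rg1 j).index)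
          (fun i j k l => f₂ (((rh1 i).left k ⊗ₜ[K] ((rh1 i).right k ⊗ₜ[K] rh.right i)) ⊗ₜ[K]
              ((rg1 j).left l ⊗ₜ[K] ((rg1 j).right l ⊗ₜ[K] rg.right j))))).symm
    _ = ∑ i ∈ rh.index, ∑ j ∈ rg.index,
          ((Coalgebra.counit (R := K) (rh.left i) * Coalgebra.counit (R := K) (rg.left j))
              • (1 : B)) * Φ (rh.right i ⊗ₜ[K] Φ (rg.right j ⊗ₜ[K] b)) := by
        refine Finset.sum_congr rfl fun i _ => Finset.sum_congr rfl fun j _ => ?_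
        rw [← cancel2 K H B φ hco (rh1 i) (rg1 j), Finset.sum_mul]
        refine Finset.sum_congr rfl fun k _ => ?_
        rw [Finset.sum_mul]
        refine Finset.sum_congr rfl fun l _ => ?_
        rw [hf2val]
        exact (mul_assoc _ _ _).symm
    _ = ∑ i ∈ rh.index, Coalgebra.counit (R := K) (rh.left i)
          • Φ (rh.right i ⊗ₜ[K] Φ (g ⊗ₜ[K] b)) := by
        refine Finset.sum_congr rfl fun i _ => ?_
        have inner := counit_collapse K H
          (Φ ∘ₗ TensorProduct.mk K H B (rh.right i) ∘ₗ (Φ ∘ₗ (TensorProduct.mk K H B).flip b))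
          g rg
        simp only [coe_comp, Function.comp_apply, TensorProduct.mk_apply, flip_apply] at inner
        rw [← inner, Finset.smul_sum]
        refine Finset.sum_congr rfl fun j _ => ?_
        rw [smul_mul_assoc, one_mul, mul_smul]
    _ = Φ (h ⊗ₜ[K] Φ (g ⊗ₜ[K] b)) := by
        have final := counit_collapse K H
          (Φ ∘ₗ (TensorProduct.mk K H B).flip (Φ (g ⊗ₜ[K] b))) h rh
        simp only [coe_comp, Function.comp_apply, flip_apply, TensorProduct.mk_apply] at final
        exact final

end Aux

/-- If `(H, B, φ)` is a Hopf bracoid with `φ` a coalgebra morphism, then `u(h) = φ(h ⊗ 1)`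
is a 1-cocycle with action `Φ`. -/
theorem statement11 (φ : H ⊗[K] B →ₗ[K] B)
    (hbr : IsHopfBracoid K H B φ) (hco : IsCoalgebraMorphism K H B φ) :
    IsOneCocycle K H B (uMap K H B φ) (PhiMap K H B φ) := by
  refine ⟨⟨?_, ?_, ?_, ?_⟩, ?_, ?_, ?_⟩
  · exact fun b => PhiMap_one K H B φ hbr b
  · exact fun h h' b => PhiMap_mul_act K H B φ hbr hco h h' b
  · exact fun h => PhiMap_act_one K H B φ hco h
  · exact fun h b b' => PhiMap_act_mul K H B φ hbr h b b'
  · exact fun h => counit_u K H B φ hco h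
  · exact fun h => u_comul_comp K H B φ hco h
  · exact fun h g => u_cocycle K H B φ hbr h g

end HopfBracoidPaper
end
end

section
/- Let π : H → B and τ : H' → B' be 1-cocycles over a field K with actions γ and γ' respectively, and let f : H → H' and g : B → B' be Hopf algebra morphisms such that τ ∘ f = g ∘ π and g(γ(h ⊗ b)) = γ'(f(h) ⊗ g(b)) for all h ∈ H, b ∈ B. Define ψ(h ⊗ b) := Σ π(h₍₁₎) · γ(h₍₂₎ ⊗ b) and ψ'(h' ⊗ b') := Σ τ(h'₍₁₎) · γ'(h'₍₂₎ ⊗ b'). Then g(ψ(h ⊗ b)) = ψ'(f(h) ⊗ g(b)) for all h ∈ H and b ∈ B; that is, (f, g) is a morphism of Hopf bracoids from (H, B, ψ) to (H', B', ψ'). -/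
open TensorProduct LinearMap

noncomputable section

namespace HopfBracoidPaper

variable (K : Type*) [Field K]
variable (H B : Type*) [Ring H] [Ring B] [HopfAlgebra K H] [HopfAlgebra K B]

/-- A morphism of 1-cocycles induces a morphism of the associated Hopf bracoids. -/
theorem statement12 {H' B' : Type*} [Ring H'] [Ring B']
    [HopfAlgebra K H'] [HopfAlgebra K B']
    (π : H →ₗ[K] B) (γ : H ⊗[K] B →ₗ[K] B)
    (τ : H' →ₗ[K] B') (γ' : H' ⊗[K] B' →ₗ[K] B')
    (hπ : IsOneCocycle K H B π γ) (hτ : IsOneCocycle K H' B' τ γ')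
    (f : H →ₐc[K] H') (g : B →ₐc[K] B')
    (hcomm : ∀ h : H, τ (f h) = g (π h))
    (hequiv : ∀ (h : H) (b : B), g (γ (h ⊗ₜ[K] b)) = γ' (f h ⊗ₜ[K] g b)) :
    ∀ (h : H) (b : B),
      g (psiMap K H B π γ (h ⊗ₜ[K] b)) = psiMap K H' B' τ γ' (f h ⊗ₜ[K] g b) := by
  intro h b
  have hc : Coalgebra.comul (R := K) (f h) =
      TensorProduct.map f.toLinearMap f.toLinearMap (Coalgebra.comul (R := K) h) := by
    have := CoalgHomClass.map_comp_comul (f := f)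
    exact (congrFun (congrArg DFunLike.coe this) h).symm
  simp only [psiMap, LinearMap.comp_apply, LinearMap.rTensor_tmul, hc]
  induction Coalgebra.comul (R := K) h using TensorProduct.induction_on with
  | zero => simp only [TensorProduct.zero_tmul, map_zero]
  | tmul x y =>
      simp only [TensorProduct.map_tmul, TensorProduct.assoc_tmul,
        LinearEquiv.coe_coe, LinearMap.mul'_apply, map_mul, hequiv]
      have hx : f.toLinearMap x = f x := rfl
      have hy : f.toLinearMap y = f y := rfl
      rw [hx, hy, hcomm]
  | add u v hu hv =>
      simp only [TensorProduct.add_tmul, map_add, hu, hv]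

end HopfBracoidPaper
end
end

section
/- Let (H, B, φ) be a Hopf bracoid over a field K with H cocommutative, and set u(h) := φ(h ⊗ 1_B). Then φ satisfies the Hopf bracoid compatibility with respect to the opposite multiplication of B: for all h ∈ H and b, b' ∈ B, φ(h ⊗ b' · b) = Σ φ(h₍₃₎ ⊗ b') · S_B(u(h₍₂₎)) · φ(h₍₁₎ ⊗ b) (using Sweedler notation Σ h₍₁₎ ⊗ h₍₂₎ ⊗ h₍₃₎ for the iterated comultiplication of h). In particular, if additionally the opposite algebra of B, with the same unit, comultiplication, counit and antipode, is a Hopf K-algebra, then (H, B^op, φ) is a Hopf bracoid over K. -/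
open TensorProduct LinearMap

noncomputable section

namespace HopfBracoidPaper

variable (K : Type*) [Field K]
variable (H B : Type*) [Ring H] [Ring B] [HopfAlgebra K H] [HopfAlgebra K B]

-- ===== auxiliary material for `statement17` =====

def NMap (φ : H ⊗[K] B →ₗ[K] B) : (H ⊗[K] H) ⊗[K] B →ₗ[K] B :=
  LinearMap.mul' K B
    ∘ₗ TensorProduct.map (HopfAlgebra.antipode (R := K) ∘ₗ uMap K H B φ) φ
    ∘ₗ (TensorProduct.assoc K H H B).toLinearMap

def NOpMap (φ : H ⊗[K] B →ₗ[K] B) : (H ⊗[K] H) ⊗[K] B →ₗ[K] B :=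
  LinearMap.mul' K B
    ∘ₗ (TensorProduct.comm K B B).toLinearMap
    ∘ₗ TensorProduct.map (HopfAlgebra.antipode (R := K) ∘ₗ uMap K H B φ) φ
    ∘ₗ (TensorProduct.assoc K H H B).toLinearMap

lemma PhiMap_eq (φ : H ⊗[K] B →ₗ[K] B) :
    PhiMap K H B φ = NMap K H B φ ∘ₗ LinearMap.rTensor B (Coalgebra.comul (R := K)) := rfl

lemma PhiOpMap_eq (φ : H ⊗[K] B →ₗ[K] B) :
    PhiOpMap K H B φ = NOpMap K H B φ ∘ₗ LinearMap.rTensor B (Coalgebra.comul (R := K)) := rfl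

def GGoal (φ : H ⊗[K] B →ₗ[K] B) : ((H ⊗[K] H) ⊗[K] H) ⊗[K] (B ⊗[K] B) →ₗ[K] B :=
  LinearMap.mul' K B
    ∘ₗ (TensorProduct.comm K B B).toLinearMap
    ∘ₗ TensorProduct.map
        (LinearMap.mul' K B
          ∘ₗ TensorProduct.map (HopfAlgebra.antipode (R := K) ∘ₗ uMap K H B φ) φ
          ∘ₗ (TensorProduct.assoc K H H B).toLinearMap
          ∘ₗ LinearMap.rTensor B (TensorProduct.comm K H H).toLinearMap) φ
    ∘ₗ (TensorProduct.tensorTensorTensorComm K (H ⊗[K] H) H B B).toLinearMap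

def revMap : H ⊗[K] (H ⊗[K] H) →ₗ[K] H ⊗[K] (H ⊗[K] H) :=
  LinearMap.lTensor H (TensorProduct.comm K H H).toLinearMap
    ∘ₗ (TensorProduct.assoc K H H H).toLinearMap
    ∘ₗ LinearMap.rTensor H (TensorProduct.comm K H H).toLinearMap
    ∘ₗ (TensorProduct.assoc K H H H).symm.toLinearMap
    ∘ₗ LinearMap.lTensor H (TensorProduct.comm K H H).toLinearMap

lemma cpull (φ : H ⊗[K] B →ₗ[K] B) (ψ : (H ⊗[K] H) ⊗[K] B →ₗ[K] B) :
    TensorProduct.map φ (ψ ∘ₗ LinearMap.rTensor B (Coalgebra.comul (R := K)))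
      ∘ₗ (TensorProduct.tensorTensorTensorComm K H H B B).toLinearMap
    = TensorProduct.map φ ψ
      ∘ₗ (TensorProduct.tensorTensorTensorComm K H (H ⊗[K] H) B B).toLinearMap
      ∘ₗ TensorProduct.map (LinearMap.lTensor H (Coalgebra.comul (R := K))) LinearMap.id := by
  ext x y c c'
  simp

lemma main1 (φ : H ⊗[K] B →ₗ[K] B) :
    LinearMap.mul' K B
      ∘ₗ TensorProduct.map φ (NMap K H B φ)
      ∘ₗ (TensorProduct.tensorTensorTensorComm K H (H ⊗[K] H) B B).toLinearMap
      ∘ₗ TensorProduct.map (revMap K H) (TensorProduct.comm K B B).toLinearMap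
    = GGoal K H B φ
      ∘ₗ TensorProduct.map (TensorProduct.assoc K H H H).symm.toLinearMap
          (LinearMap.id : B ⊗[K] B →ₗ[K] B ⊗[K] B) := by
  ext x y z c c'
  simp [GGoal, NMap, revMap, mul_assoc]

lemma main2 (φ : H ⊗[K] B →ₗ[K] B) :
    LinearMap.mul' K B
      ∘ₗ (TensorProduct.comm K B B).toLinearMap
      ∘ₗ TensorProduct.map φ (NOpMap K H B φ)
      ∘ₗ (TensorProduct.tensorTensorTensorComm K H (H ⊗[K] H) B B).toLinearMap
    = GGoal K H B φ
      ∘ₗ TensorProduct.map (TensorProduct.assoc K H H H).symm.toLinearMap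
          (LinearMap.id : B ⊗[K] B →ₗ[K] B ⊗[K] B) := by
  ext x y z c c'
  simp [GGoal, NOpMap, mul_assoc]

/-- If `(H, B, φ)` is a Hopf bracoid with `H` cocommutative, then `φ` satisfies the
Hopf bracoid compatibility with respect to the opposite multiplication of `B`:
`φ(h ⊗ b'·b) = Σ φ(h₍₃₎ ⊗ b') · S_B(u(h₍₂₎)) · φ(h₍₁₎ ⊗ b)`.  In particular, if the
opposite algebra of `B` (with the same unit, comultiplication, counit and antipode) is a
Hopf algebra, then `(H, Bᵒᵖ, φ)` is a Hopf bracoid, i.e. `φ` satisfies the compatibility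
condition `φ(h ⊗ b ∗ b') = Σ φ(h₍₁₎ ⊗ b) ∗ Φᵒᵖ(h₍₂₎ ⊗ b')` for the opposite product `∗`. -/
theorem statement17 (φ : H ⊗[K] B →ₗ[K] B)
    (hbr : IsHopfBracoid K H B φ) (hcoc : IsCocommutative K H) :
    (∀ (h : H) (b b' : B),
      φ (h ⊗ₜ[K] (b' * b)) =
        (LinearMap.mul' K B
          ∘ₗ (TensorProduct.comm K B B).toLinearMap
          ∘ₗ TensorProduct.map
              (LinearMap.mul' K B
                ∘ₗ TensorProduct.map (HopfAlgebra.antipode (R := K) ∘ₗ uMap K H B φ) φ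
                ∘ₗ (TensorProduct.assoc K H H B).toLinearMap
                ∘ₗ LinearMap.rTensor B (TensorProduct.comm K H H).toLinearMap) φ
          ∘ₗ (TensorProduct.tensorTensorTensorComm K (H ⊗[K] H) H B B).toLinearMap)
          ((LinearMap.rTensor H (Coalgebra.comul (R := K)) (Coalgebra.comul (R := K) h))
            ⊗ₜ[K] (b ⊗ₜ[K] b'))) ∧
    -- in particular: if the opposite algebra of `B` is a Hopf algebra (with the same
    -- unit, comultiplication, counit and antipode), i.e. the antipode axioms hold for
    -- the opposite product, then `(H, Bᵒᵖ, φ)` is a Hopf bracoid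
    ((∀ b : B,
        LinearMap.mul' K B
          ((TensorProduct.comm K B B)
            (LinearMap.rTensor B (HopfAlgebra.antipode (R := K))
              (Coalgebra.comul (R := K) b))) =
          Coalgebra.counit (R := K) b • (1 : B) ∧
      LinearMap.mul' K B
          ((TensorProduct.comm K B B)
            (LinearMap.lTensor B (HopfAlgebra.antipode (R := K))
              (Coalgebra.comul (R := K) b))) =
          Coalgebra.counit (R := K) b • (1 : B)) →
      ∀ (h : H) (b b' : B),
        φ (h ⊗ₜ[K] (b' * b)) =
          (LinearMap.mul' K B
            ∘ₗ (TensorProduct.comm K B B).toLinearMap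
            ∘ₗ TensorProduct.map φ (PhiOpMap K H B φ)
            ∘ₗ (TensorProduct.tensorTensorTensorComm K H H B B).toLinearMap)
            ((Coalgebra.comul (R := K) h) ⊗ₜ[K] (b ⊗ₜ[K] b'))) := by
  have hcomm : (TensorProduct.comm K H H).toLinearMap
      ∘ₗ (Coalgebra.comul (R := K) (A := H)) = Coalgebra.comul (R := K) :=
    LinearMap.ext fun x => hcoc x
  have hrevY : ∀ h : H,
      revMap K H (LinearMap.lTensor H (Coalgebra.comul (R := K)) (Coalgebra.comul (R := K) h))
        = LinearMap.lTensor H (Coalgebra.comul (R := K)) (Coalgebra.comul (R := K) h) := by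
    intro h
    have e1 : ∀ t : H ⊗[K] H,
        LinearMap.lTensor H (TensorProduct.comm K H H).toLinearMap
          (LinearMap.lTensor H (Coalgebra.comul (R := K)) t)
        = LinearMap.lTensor H (Coalgebra.comul (R := K)) t := by
      intro t; rw [← LinearMap.comp_apply, ← LinearMap.lTensor_comp, hcomm]
    have e3 : ∀ t : H ⊗[K] H,
        LinearMap.rTensor H (TensorProduct.comm K H H).toLinearMap
          (LinearMap.rTensor H (Coalgebra.comul (R := K)) t)
        = LinearMap.rTensor H (Coalgebra.comul (R := K)) t := by
      intro t; rw [← LinearMap.comp_apply, ← LinearMap.rTensor_comp, hcomm]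
    simp only [revMap, LinearMap.comp_apply, LinearEquiv.coe_coe]
    rw [e1, Coalgebra.coassoc_symm_apply, e3, Coalgebra.coassoc_apply, e1]
  have final : ∀ (h : H) (b b' : B),
      (LinearMap.mul' K B
        ∘ₗ TensorProduct.map φ (PhiMap K H B φ)
        ∘ₗ (TensorProduct.tensorTensorTensorComm K H H B B).toLinearMap)
        ((Coalgebra.comul (R := K) h) ⊗ₜ[K] (b' ⊗ₜ[K] b))
      = GGoal K H B φ
          ((LinearMap.rTensor H (Coalgebra.comul (R := K)) (Coalgebra.comul (R := K) h))
            ⊗ₜ[K] (b ⊗ₜ[K] b')) := by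
    intro h b b'
    rw [PhiMap_eq]
    have e1 := LinearMap.congr_fun
      (congrArg (fun m => LinearMap.mul' K B ∘ₗ m) (cpull K H B φ (NMap K H B φ)))
      ((Coalgebra.comul (R := K) h) ⊗ₜ[K] (b' ⊗ₜ[K] b))
    rw [e1]
    have e2 := LinearMap.congr_fun (main1 K H B φ)
      ((LinearMap.lTensor H (Coalgebra.comul (R := K)) (Coalgebra.comul (R := K) h))
        ⊗ₜ[K] (b ⊗ₜ[K] b'))
    simp only [LinearMap.comp_apply, TensorProduct.map_tmul, TensorProduct.comm_tmul,
      LinearMap.id_coe, id_eq, LinearEquiv.coe_coe, Coalgebra.coassoc_symm_apply] at e2 ⊢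
    rw [← hrevY h, e2]
  have part1 : ∀ (h : H) (b b' : B),
      φ (h ⊗ₜ[K] (b' * b)) =
        (LinearMap.mul' K B
          ∘ₗ (TensorProduct.comm K B B).toLinearMap
          ∘ₗ TensorProduct.map
              (LinearMap.mul' K B
                ∘ₗ TensorProduct.map (HopfAlgebra.antipode (R := K) ∘ₗ uMap K H B φ) φ
                ∘ₗ (TensorProduct.assoc K H H B).toLinearMap
                ∘ₗ LinearMap.rTensor B (TensorProduct.comm K H H).toLinearMap) φ
          ∘ₗ (TensorProduct.tensorTensorTensorComm K (H ⊗[K] H) H B B).toLinearMap)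
          ((LinearMap.rTensor H (Coalgebra.comul (R := K)) (Coalgebra.comul (R := K) h))
            ⊗ₜ[K] (b ⊗ₜ[K] b')) := by
    intro h b b'
    rw [hbr.compat h b' b]
    exact final h b b'
  refine ⟨part1, fun _ h b b' => ?_⟩
  rw [part1 h b b']
  have final2 :
      (LinearMap.mul' K B
        ∘ₗ (TensorProduct.comm K B B).toLinearMap
        ∘ₗ TensorProduct.map φ (PhiOpMap K H B φ)
        ∘ₗ (TensorProduct.tensorTensorTensorComm K H H B B).toLinearMap)
        ((Coalgebra.comul (R := K) h) ⊗ₜ[K] (b ⊗ₜ[K] b'))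
      = GGoal K H B φ
          ((LinearMap.rTensor H (Coalgebra.comul (R := K)) (Coalgebra.comul (R := K) h))
            ⊗ₜ[K] (b ⊗ₜ[K] b')) := by
    rw [PhiOpMap_eq]
    have e3 := LinearMap.congr_fun
      (congrArg (fun m => LinearMap.mul' K B ∘ₗ (TensorProduct.comm K B B).toLinearMap ∘ₗ m)
        (cpull K H B φ (NOpMap K H B φ)))
      ((Coalgebra.comul (R := K) h) ⊗ₜ[K] (b ⊗ₜ[K] b'))
    rw [e3]
    have e4 := LinearMap.congr_fun (main2 K H B φ)
      ((LinearMap.lTensor H (Coalgebra.comul (R := K)) (Coalgebra.comul (R := K) h))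
        ⊗ₜ[K] (b ⊗ₜ[K] b'))
    simp only [LinearMap.comp_apply, TensorProduct.map_tmul, TensorProduct.comm_tmul,
      LinearMap.id_coe, id_eq, LinearEquiv.coe_coe, Coalgebra.coassoc_symm_apply] at e4 ⊢
    rw [e4]
  exact final2.symm


end HopfBracoidPaper
end
end

section
/- Let (H, B, φ) be a Hopf bracoid over a field K such that φ is a coalgebra morphism. Then the group-like elements form a generalized skew bracoid under the induced action: (i) if h is a group-like element of H and b is a group-like element of B, then φ(h ⊗ b) is a group-like element of B; (ii) the map (h, b) ↦ φ(h ⊗ b) is a left action of the group G(H) on the set G(B); and (iii) for all group-like h ∈ G(H) and b, b' ∈ G(B), φ(h ⊗ b b') = φ(h ⊗ b) · S_B(φ(h ⊗ 1_B)) · φ(h ⊗ b'), where S_B(φ(h ⊗ 1_B)) is the inverse of the group-like element φ(h ⊗ 1_B) in the group G(B). -/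
open TensorProduct LinearMap

noncomputable section

namespace HopfBracoidPaper

variable (K : Type*) [Field K]
variable (H B : Type*) [Ring H] [Ring B] [HopfAlgebra K H] [HopfAlgebra K B]

/-- If `(H, B, φ)` is a Hopf bracoid with `φ` a coalgebra morphism, then the group-like
elements form a generalized skew bracoid under the induced action. -/
theorem statement19 (φ : H ⊗[K] B →ₗ[K] B)
    (hbr : IsHopfBracoid K H B φ) (hco : IsCoalgebraMorphism K H B φ) :
    -- (i) group-likes are stable under the action
    (∀ (h : H) (b : B), IsGroupLike K H h → IsGroupLike K B b →
      IsGroupLike K B (φ (h ⊗ₜ[K] b))) ∧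
    -- (ii) the induced map is a left action of `G(H)` on `G(B)`
    (∀ b : B, IsGroupLike K B b → φ ((1 : H) ⊗ₜ[K] b) = b) ∧
    (∀ (h h' : H) (b : B), IsGroupLike K H h → IsGroupLike K H h' → IsGroupLike K B b →
      φ ((h * h') ⊗ₜ[K] b) = φ (h ⊗ₜ[K] φ (h' ⊗ₜ[K] b))) ∧
    -- the antipode provides the group inverse of the group-like element `φ(h ⊗ 1)`
    (∀ h : H, IsGroupLike K H h →
      φ (h ⊗ₜ[K] (1 : B)) * HopfAlgebra.antipode (R := K) (φ (h ⊗ₜ[K] (1 : B))) = 1 ∧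
      HopfAlgebra.antipode (R := K) (φ (h ⊗ₜ[K] (1 : B))) * φ (h ⊗ₜ[K] (1 : B)) = 1) ∧
    -- (iii) the skew bracoid compatibility on group-like elements
    (∀ (h : H) (b b' : B), IsGroupLike K H h → IsGroupLike K B b → IsGroupLike K B b' →
      φ (h ⊗ₜ[K] (b * b')) =
        φ (h ⊗ₜ[K] b) * HopfAlgebra.antipode (R := K) (φ (h ⊗ₜ[K] (1 : B))) *
          φ (h ⊗ₜ[K] b')) := by
  constructor
  · -- (i)
    rintro h b ⟨hε, hδ⟩ ⟨bε, bδ⟩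
    refine ⟨?_, ?_⟩
    · rw [hco.counit_comp, hε, bε, one_mul]
    · rw [hco.comul_comp, hδ, bδ]
      simp [TensorProduct.tensorTensorTensorComm_tmul]
  refine ⟨fun b _ => hbr.one_act b, fun h h' b _ _ _ => hbr.mul_act h h' b, ?_, ?_⟩
  · -- inverse
    rintro h ⟨hε, hδ⟩
    have gl : IsGroupLike K B (φ (h ⊗ₜ[K] (1 : B))) := by
      refine ⟨?_, ?_⟩
      · rw [hco.counit_comp, hε]; simp
      · rw [hco.comul_comp, hδ]
        simp [TensorProduct.tensorTensorTensorComm_tmul, Bialgebra.comul_one, Algebra.TensorProduct.one_def]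
    obtain ⟨gε, gδ⟩ := gl
    constructor
    · have := HopfAlgebra.mul_antipode_lTensor_comul_apply (R := K) (φ (h ⊗ₜ[K] (1 : B)))
      rw [gδ, gε] at this; simpa using this
    · have := HopfAlgebra.mul_antipode_rTensor_comul_apply (R := K) (φ (h ⊗ₜ[K] (1 : B)))
      rw [gδ, gε] at this; simpa using this
  · -- (iii)
    rintro h b b' ⟨hε, hδ⟩ _ _
    rw [hbr.compat h b b']
    rw [hδ]
    simp only [TensorProduct.tensorTensorTensorComm_tmul, LinearMap.coe_comp,
      Function.comp_apply, LinearEquiv.coe_coe, TensorProduct.map_tmul,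
      LinearMap.mul'_apply]
    rw [PhiMap]
    simp only [LinearMap.coe_comp, Function.comp_apply, LinearMap.rTensor_tmul,
      LinearEquiv.coe_coe]
    rw [hδ]
    simp only [TensorProduct.assoc_tmul, TensorProduct.map_tmul, LinearMap.mul'_apply,
      LinearMap.coe_comp, Function.comp_apply]
    rw [uMap]
    simp [mul_assoc]


end HopfBracoidPaper
end
end
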